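/- arXiv:0909.0892 — 5 statements merged into one kernel-verified Lean document; each statement's English description precedes it below -/
import Mathlib

section
/- If a random variable θ satisfies θ ≥ 0 almost surely and Pr[θ < t - Z·u] ≤ 1/Z for all Z ∈ [1, r] where r = t/u ≥ 1 and u > 0, then E[θ] ≥ t - (1 + log r)·u. -/
open MeasureTheory Real Set

/-- If a nonnegative random variable `θ` satisfies the tail bound
`Pr[θ < t - Z·u] ≤ 1/Z` for all `Z ∈ [1, r]` with `r = t/u ≥ 1` and `u > 0`,
then `E[θ] ≥ t - (1 + log r)·u`. -/
theorem tail_integration_bound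
    {Ω : Type*} [MeasurableSpace Ω] (μ : Measure Ω) [IsProbabilityMeasure μ]
    (θ : Ω → ℝ) (hint : Integrable θ μ) (hnn : ∀ᵐ ω ∂μ, 0 ≤ θ ω)
    (t u : ℝ) (hu : 0 < u) (hr : 1 ≤ t / u)
    (htail : ∀ Z : ℝ, 1 ≤ Z → Z ≤ t / u →
      (μ {ω | θ ω < t - Z * u}).toReal ≤ 1 / Z) :
    t - (1 + Real.log (t / u)) * u ≤ ∫ ω, θ ω ∂μ := by
  have hut : u ≤ t := by
    have := (le_div_iff₀ hu).mp hr; linarith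
  set M : ℝ := t - u with hM
  have hM0 : 0 ≤ M := by simp [hM]; linarith
  set g : ℝ → ℝ := fun s => (μ {ω | s ≤ θ ω}).toReal with hg
  -- layer cake
  rw [hint.integral_eq_integral_meas_le hnn]
  have g_anti : Antitone fun s => μ {ω | s ≤ θ ω} :=
    fun a b hab => measure_mono (fun ω h => le_trans hab h)
  have g_mble : Measurable g :=
    (g_anti.measurable).ennreal_toReal
  have g_nonneg : ∀ s, 0 ≤ g s := fun s => ENNReal.toReal_nonneg
  have g_le_one : ∀ s, g s ≤ 1 := by
    intro s
    have : μ {ω | s ≤ θ ω} ≤ 1 := prob_le_one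
    simpa [hg] using ENNReal.toReal_le_of_le_ofReal zero_le_one (by simpa using this)
  -- integrability of g on Ioi 0
  have g_int : IntegrableOn g (Ioi 0) := by
    have key := lintegral_eq_lintegral_meas_le μ hnn hint.aemeasurable
    have fin : (∫⁻ s in Ioi (0:ℝ), μ {ω | s ≤ θ ω}) < ⊤ := by
      rw [← key]; exact hint.lintegral_lt_top
    refine ⟨g_mble.aestronglyMeasurable, ?_⟩
    rw [hasFiniteIntegral_iff_norm]
    have : ∀ s : ℝ, ENNReal.ofReal ‖g s‖ = μ {ω | s ≤ θ ω} := by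
      intro s
      rw [Real.norm_of_nonneg (g_nonneg s), hg,
        ENNReal.ofReal_toReal (measure_ne_top μ _)]
    calc ∫⁻ s in Ioi (0:ℝ), ENNReal.ofReal ‖g s‖
        = ∫⁻ s in Ioi (0:ℝ), μ {ω | s ≤ θ ω} := by
          exact lintegral_congr fun s => this s
      _ < ⊤ := fin
  -- restrict integral to Ioc 0 M
  have step1 : ∫ s in Ioc 0 M, g s ≤ ∫ s in Ioi 0, g s := by
    refine setIntegral_mono_set g_int ?_ ?_
    · exact Filter.Eventually.of_forall fun s => g_nonneg s
    · exact HasSubset.Subset.eventuallyLE Ioc_subset_Ioi_self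
  -- pointwise lower bound on Ioc 0 M
  have hpt : ∀ s ∈ Ioc (0:ℝ) M, 1 - u / (t - s) ≤ g s := by
    intro s hs
    obtain ⟨hs0, hsM⟩ := hs
    have hts : u ≤ t - s := by simp [hM] at hsM; linarith
    have hts0 : 0 < t - s := lt_of_lt_of_le hu hts
    have hZ1 : 1 ≤ (t - s) / u := (le_div_iff₀ hu).mpr (by linarith)
    have hZ2 : (t - s) / u ≤ t / u := by gcongr <;> linarith
    have htt : t - ((t - s) / u) * u = s := by field_simp; ring
    have hta := htail ((t - s) / u) hZ1 hZ2
    rw [htt, one_div_div] at hta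
    -- g s = 1 - μ {θ < s}
    have hcompl : {ω | s ≤ θ ω} = {ω | θ ω < s}ᶜ := by
      ext ω; simp [not_lt]
    have hnm : NullMeasurableSet {ω | θ ω < s} μ :=
      hint.aemeasurable.nullMeasurable measurableSet_Iio
    have hmc : μ {ω | s ≤ θ ω} = 1 - μ {ω | θ ω < s} := by
      rw [hcompl, measure_compl₀ hnm (measure_ne_top μ _), measure_univ]
    have : g s = 1 - (μ {ω | θ ω < s}).toReal := by
      rw [hg]; simp only
      rw [hmc, ENNReal.toReal_sub_of_le (prob_le_one) ENNReal.one_ne_top]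
      simp
    rw [this]
    have := hta
    linarith
  -- lower bound via explicit integral
  have h_int2 : IntegrableOn (fun s => 1 - u / (t - s)) (Ioc 0 M) := by
    refine (ContinuousOn.integrableOn_compact isCompact_Icc ?_).mono_set Ioc_subset_Icc_self
    apply ContinuousOn.sub continuousOn_const
    apply ContinuousOn.div continuousOn_const (by fun_prop)
    intro s hs
    obtain ⟨hs0, hsM⟩ := hs
    have : u ≤ t - s := by simp [hM] at hsM; linarith
    linarith
  have g_int2 : IntegrableOn g (Ioc 0 M) := g_int.mono_set Ioc_subset_Ioi_self
  have step2 : ∫ s in Ioc 0 M, (1 - u / (t - s)) ≤ ∫ s in Ioc 0 M, g s :=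
    setIntegral_mono_on h_int2 g_int2 measurableSet_Ioc hpt
  -- compute the explicit integral
  have hcomp : ∫ s in Ioc 0 M, (1 - u / (t - s)) = t - (1 + Real.log (t / u)) * u := by
    rw [← intervalIntegral.integral_of_le hM0]
    have hI1 : IntervalIntegrable (fun _ : ℝ => (1:ℝ)) volume 0 M :=
      intervalIntegrable_const
    have hI2 : IntervalIntegrable (fun s => u / (t - s)) volume 0 M := by
      apply ContinuousOn.intervalIntegrable
      apply ContinuousOn.div continuousOn_const (by fun_prop)
      intro s hs
      rw [uIcc_of_le hM0] at hs
      obtain ⟨hs0, hsM⟩ := hs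
      have : u ≤ t - s := by simp [hM] at hsM; linarith
      linarith
    rw [intervalIntegral.integral_sub hI1 hI2]
    have h2 : ∫ s in (0:ℝ)..M, u / (t - s) = u * Real.log (t / u) := by
      have : ∀ s, u / (t - s) = u * (t - s)⁻¹ := fun s => div_eq_mul_inv u _
      simp_rw [this]
      rw [intervalIntegral.integral_const_mul]
      rw [intervalIntegral.integral_comp_sub_left (fun y => y⁻¹) t]
      simp only [sub_zero]
      have : t - M = u := by simp [hM]
      rw [this]
      rw [integral_inv]
      · rw [uIcc_of_le hut]
        rintro ⟨h1, h2⟩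
        linarith
    rw [h2]
    simp [hM]
    ring
  have hreal : ∫ s in Ioi (0:ℝ), μ.real {a | s ≤ θ a} = ∫ s in Ioi 0, g s := rfl
  linarith
end

section
/- For all reals t ≥ 0, u ≥ 0, E ≥ 0 and all k > 1: if E ≥ t - (1 + log(t/u))·u whenever u > 0 and t/u ≥ 1, and E ≥ t whenever u = 0 or t ≤ u, then E ≥ (1 - (1 + log k)/k)·t - (1 + log k)·u. -/
/-- Case analysis of Claim `bayes.k`: if `E ≥ t - (1 + log(t/u))·u` whenever `u > 0` and
`t/u ≥ 1`, and `E ≥ t` whenever `u = 0` or `t ≤ u`, then for every `k > 1`,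
`E ≥ (1 - (1 + log k)/k)·t - (1 + log k)·u`. -/
theorem bayes_case_analysis (t u E k : ℝ)
    (ht : 0 ≤ t) (hu : 0 ≤ u) (hE : 0 ≤ E) (hk : 1 < k)
    (h1 : 0 < u → 1 ≤ t / u → E ≥ t - (1 + Real.log (t / u)) * u)
    (h2 : u = 0 ∨ t ≤ u → E ≥ t) :
    E ≥ (1 - (1 + Real.log k) / k) * t - (1 + Real.log k) * u := by
  have hk0 : (0:ℝ) < k := lt_trans one_pos hk
  have hlogk : 0 < Real.log k := Real.log_pos hk
  have hL0 : (0:ℝ) < 1 + Real.log k := by linarith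
  rcases eq_or_lt_of_le hu with h | hu0
  · have hE' := h2 (Or.inl h.symm)
    have h3 : 0 ≤ (1 + Real.log k) / k * t := by positivity
    nlinarith
  rcases le_or_gt t u with htu | hut
  · have hE' := h2 (Or.inr htu)
    have h3 : 0 ≤ (1 + Real.log k) / k * t := by positivity
    have h4 : 0 ≤ (1 + Real.log k) * u := by positivity
    nlinarith
  · have hr : 1 ≤ t / u := (one_le_div hu0).2 hut.le
    have hE' := h1 hu0 hr
    set r := t / u with hrdef
    have hr0 : (0:ℝ) < r := by linarith
    have hru : r * u = t := div_mul_cancel₀ t (ne_of_gt hu0)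
    have key : 1 + Real.log r ≤ (1 + Real.log k) * (r / k) + (1 + Real.log k) := by
      rcases le_or_gt r k with hc | hc
      · have hlr : Real.log r ≤ Real.log k := Real.log_le_log hr0 hc
        have : 0 ≤ (1 + Real.log k) * (r / k) := by positivity
        linarith
      · have hlog : Real.log (r / k) ≤ r / k - 1 :=
          Real.log_le_sub_one_of_pos (by positivity)
        have hld : Real.log (r / k) = Real.log r - Real.log k :=
          Real.log_div (ne_of_gt hr0) (ne_of_gt hk0)
        have h5 : Real.log r ≤ Real.log k + r / k - 1 := by
          rw [hld] at hlog; linarith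
        have h6 : k * Real.log k ≤ r * Real.log k := by nlinarith
        have hkr : k * (r / k) = r := by field_simp
        have h8 : (1 + Real.log r) * k ≤ r + r * Real.log k + (1 + Real.log k) * k := by
          nlinarith [mul_le_mul_of_nonneg_left h5 hk0.le]
        have h9 : 1 + Real.log r = ((1 + Real.log r) * k) / k := by field_simp
        rw [h9]
        have h10 : (1 + Real.log k) * (r / k) + (1 + Real.log k)
            = (r + r * Real.log k + (1 + Real.log k) * k) / k := by field_simp
        rw [h10]
        gcongr
    have hstep : (1 + Real.log r) * u ≤ (1 + Real.log k) / k * t + (1 + Real.log k) * u := by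
      have hmul := mul_le_mul_of_nonneg_right key hu0.le
      have heq : ((1 + Real.log k) * (r / k) + (1 + Real.log k)) * u
          = (1 + Real.log k) / k * (r * u) + (1 + Real.log k) * u := by ring
      rw [hru] at heq
      linarith [hmul, heq.le, heq.ge]
    linarith
end

section
/- In a single-item first-price auction among n agents with true values t₁,…,tₙ ≥ 0 (ties broken by fixed priority of indices), any pure Nash equilibrium bid profile allocates the item to an agent whose value is at least the second-highest true value, and the achieved welfare is at least half the optimal welfare; in fact, the price of anarchy in pure strategies is at most 2, matching c+1 for the c=1-approximate greedy rule restricted to a single item with one bidder served. -/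
open scoped Classical

/-- The winner of a single-item first-price auction: the highest bidder, with ties
broken in favour of the agent of least index (`⊤` if there are no agents). -/
noncomputable def auctionWinner {n : ℕ} (b : Fin n → ℝ) : WithTop (Fin n) :=
  ((Finset.univ : Finset (Fin n)).filter (fun i => ∀ j, b j ≤ b i)).min

/-- First-price utility of agent `i` with true values `t` and bids `b`. -/
noncomputable def auctionUtil {n : ℕ} (t b : Fin n → ℝ) (i : Fin n) : ℝ :=
  if auctionWinner b = (i : WithTop (Fin n)) then t i - b i else 0

/-- In a single-item first-price auction, at any pure Nash equilibrium in which agents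
do not overbid, the item goes to an agent whose value is at least the second-highest
true value, and the achieved welfare is at least half the optimal welfare
(pure price of anarchy at most `2 = c + 1` for the `c = 1`-approximate greedy rule). -/
theorem single_item_first_price_poa {n : ℕ} (hn : 1 ≤ n)
    (t b : Fin n → ℝ) (ht : ∀ i, 0 ≤ t i) (hb0 : ∀ i, 0 ≤ b i)
    (hnoover : ∀ i, b i ≤ t i)
    (hNE : ∀ (i : Fin n) (b' : ℝ), 0 ≤ b' →
      auctionUtil t (Function.update b i b') i ≤ auctionUtil t b i) :
    ∃ w : Fin n, auctionWinner b = (w : WithTop (Fin n)) ∧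
      (∀ i j, i ≠ j → min (t i) (t j) ≤ t w) ∧
      (∀ i, t i ≤ 2 * t w) := by
  classical
  have hne : (0 : ℕ) < n := hn
  obtain ⟨m, -, hmax⟩ := Finset.exists_max_image (Finset.univ : Finset (Fin n)) b
    ⟨⟨0, hne⟩, Finset.mem_univ _⟩
  have hS : ((Finset.univ : Finset (Fin n)).filter (fun i => ∀ j, b j ≤ b i)).Nonempty :=
    ⟨m, by
      simp only [Finset.mem_filter, Finset.mem_univ, true_and]
      exact fun j => hmax j (Finset.mem_univ j)⟩
  obtain ⟨w, hw⟩ := Finset.min_of_nonempty hS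
  have hwmem := Finset.mem_of_min hw
  rw [Finset.mem_filter] at hwmem
  have hwmax : ∀ j, b j ≤ b w := hwmem.2
  have hwin : auctionWinner b = (w : WithTop (Fin n)) := hw
  have key : ∀ i : Fin n, i ≠ w → t i ≤ b w := by
    intro i hiw
    by_contra h
    push_neg at h
    set b' := (b w + t i) / 2 with hb'
    have h1 : b w < b' := by rw [hb']; linarith
    have h2 : b' < t i := by rw [hb']; linarith
    have h0 : 0 ≤ b' := le_of_lt (lt_of_le_of_lt (hb0 w) h1)
    have hfil : ((Finset.univ : Finset (Fin n)).filter
        (fun k => ∀ j, Function.update b i b' j ≤ Function.update b i b' k)) = {i} := by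
      ext k
      simp only [Finset.mem_filter, Finset.mem_univ, true_and, Finset.mem_singleton]
      constructor
      · intro hk
        by_contra hki
        have hki' := hk i
        rw [Function.update_self, Function.update_of_ne hki] at hki'
        have : b k < b' := lt_of_le_of_lt (hwmax k) h1
        linarith
      · intro hk j
        rcases eq_or_ne j i with hji | hji
        · rw [hk, hji]
        · rw [hk, Function.update_self, Function.update_of_ne hji]
          exact le_of_lt (lt_of_le_of_lt (hwmax j) h1)
    have hwin' : auctionWinner (Function.update b i b') = (i : WithTop (Fin n)) := by
      rw [auctionWinner, hfil, Finset.min_singleton]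
    have hu' : auctionUtil t (Function.update b i b') i = t i - b' := by
      rw [auctionUtil, if_pos hwin', Function.update_self]
    have hu : auctionUtil t b i = 0 := by
      rw [auctionUtil, if_neg]
      rw [hwin]
      exact fun hc => hiw (by exact_mod_cast hc.symm)
    have := hNE i b' h0
    rw [hu', hu] at this
    linarith
  refine ⟨w, hwin, ?_, ?_⟩
  · intro i j hij
    rcases eq_or_ne i w with hiw | hiw
    · have hjw : j ≠ w := fun h => hij (hiw.trans h.symm)
      exact le_trans (min_le_right _ _) (le_trans (key j hjw) (hnoover w))
    · exact le_trans (min_le_left _ _) (le_trans (key i hiw) (hnoover w))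
  · intro i
    rcases eq_or_ne i w with hiw | hiw
    · rw [hiw]; have := ht w; linarith
    · have h1 := le_trans (key i hiw) (hnoover w)
      have h2 := ht w
      linarith
end

section
/- In the cardinality-restricted combinatorial auction where each allocated set has size at most k and allocated sets are disjoint, the standard greedy algorithm (repeatedly grant the remaining feasible bid of highest value) achieves welfare at least 1/(k+1) times the optimal welfare, for single-minded bidders each desiring one set of size at most k. -/
/-- Grant bids in the given order, accepting a bid when its desired set is disjoint
from all objects already granted. -/
def greedyGrant {n m : ℕ} (S : Fin n → Finset (Fin m)) :
    List (Fin n) → Finset (Fin m) → Finset (Fin n)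
  | [], _ => ∅
  | i :: rest, used =>
    if Disjoint (S i) used then insert i (greedyGrant S rest (used ∪ S i))
    else greedyGrant S rest used

lemma greedy_reject {n m : ℕ} (S : Fin n → Finset (Fin m)) (v : Fin n → ℝ) :
    ∀ (l : List (Fin n)) (used : Finset (Fin m)),
      l.Pairwise (fun i j => v j ≤ v i) →
      ∀ i ∈ l, i ∉ greedyGrant S l used →
        ¬ Disjoint (S i) used ∨
          ∃ j ∈ greedyGrant S l used, ¬ Disjoint (S i) (S j) ∧ v i ≤ v j := by
  intro l
  induction l with
  | nil => intro used _ i hi; simp at hi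
  | cons a rest ih =>
    intro used hsort i hi hni
    rw [List.pairwise_cons] at hsort
    by_cases hda : Disjoint (S a) used
    · rw [greedyGrant, if_pos hda] at hni ⊢
      have hia : i ≠ a := fun h => hni (by simp [h])
      have hir : i ∈ rest := by
        rcases List.mem_cons.mp hi with h | h
        · exact absurd h hia
        · exact h
      have hnir : i ∉ greedyGrant S rest (used ∪ S a) := fun h => hni (Finset.mem_insert_of_mem h)
      rcases ih (used ∪ S a) hsort.2 i hir hnir with h | ⟨j, hj, hdj, hvj⟩
      · rw [Finset.disjoint_union_right] at h
        push_neg at h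
        by_cases h1 : Disjoint (S i) used
        · exact Or.inr ⟨a, Finset.mem_insert_self _ _, h h1, hsort.1 i hir⟩
        · exact Or.inl h1
      · exact Or.inr ⟨j, Finset.mem_insert_of_mem hj, hdj, hvj⟩
    · rw [greedyGrant, if_neg hda] at hni ⊢
      rcases List.mem_cons.mp hi with h | h
      · exact Or.inl (h ▸ hda)
      · exact ih used hsort.2 i h hni

/-- The standard greedy algorithm for single-minded bidders in a cardinality-restricted
combinatorial auction (each desired set of size at most `k`, granted sets disjoint)
achieves welfare at least `1/(k+1)` times the optimal welfare. -/
theorem greedy_kCA_approx {n m k : ℕ}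
    (S : Fin n → Finset (Fin m)) (v : Fin n → ℝ)
    (hv : ∀ i, 0 ≤ v i) (hk : ∀ i, (S i).card ≤ k)
    (order : List (Fin n)) (hnd : order.Nodup) (hall : ∀ i, i ∈ order)
    (hsort : order.Pairwise fun i j => v j ≤ v i)
    (OPT : Finset (Fin n))
    (hOPT : (OPT : Set (Fin n)).Pairwise fun i j => Disjoint (S i) (S j)) :
    ∑ i ∈ OPT, v i ≤ ((k : ℝ) + 1) * ∑ i ∈ greedyGrant S order ∅, v i := by
  classical
  set G := greedyGrant S order ∅ with hG
  have key : ∀ i, ∃ j, i ∈ OPT → j ∈ G ∧ v i ≤ v j ∧ (i = j ∨ ¬ Disjoint (S i) (S j)) := by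
    intro i
    by_cases hiG : i ∈ G
    · exact ⟨i, fun _ => ⟨hiG, le_refl _, Or.inl rfl⟩⟩
    · rcases greedy_reject S v order ∅ hsort i (hall i) hiG with h | ⟨j, hj, hdj, hvj⟩
      · exact absurd (Finset.disjoint_empty_right _) h
      · exact ⟨j, fun _ => ⟨hj, hvj, Or.inr hdj⟩⟩
  choose f hf using key
  have hmaps : ∀ i ∈ OPT, f i ∈ G := fun i hi => (hf i hi).1
  rw [← Finset.sum_fiberwise_of_maps_to hmaps v]
  rw [Finset.mul_sum]
  apply Finset.sum_le_sum
  intro j hj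
  have hcard : (OPT.filter (fun i => f i = j)).card ≤ k + 1 := by
    set T := OPT.filter (fun i => f i = j) with hT
    have h1 : (T.erase j).card ≤ (S j).card := by
      rcases (T.erase j).eq_empty_or_nonempty with he | ⟨i0, hi0⟩
      · simp [he]
      haveI : Nonempty (Fin m) := by
        have hij : i0 ≠ j := Finset.ne_of_mem_erase hi0
        have hiT2 := Finset.mem_of_mem_erase hi0; rw [hT, Finset.mem_filter] at hiT2
        rcases (hf i0 hiT2.1).2.2 with h | h
        · rw [hiT2.2] at h; exact absurd h hij
        · rw [hiT2.2] at h; rw [Finset.not_disjoint_iff_nonempty_inter] at h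
          exact ⟨h.choose⟩
      apply Finset.card_le_card_of_injOn
        (fun i => if h : (S i ∩ S j).Nonempty then h.choose else Classical.arbitrary _)
      · intro i hi
        have hij : i ≠ j := Finset.ne_of_mem_erase hi
        have hiT : i ∈ T := Finset.mem_of_mem_erase hi
        rw [hT, Finset.mem_filter] at hiT
        have := (hf i hiT.1).2.2
        rcases this with h | h
        · rw [hiT.2] at h; exact absurd h hij
        · rw [hiT.2] at h
          have hne : (S i ∩ S j).Nonempty := by
            rwa [Finset.not_disjoint_iff_nonempty_inter] at h
          simp only [dif_pos hne]
          exact Finset.mem_of_mem_inter_right hne.choose_spec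
      · intro i hi i' hi' heq
        by_contra hne
        have hiT : i ∈ OPT := by
          have := Finset.mem_of_mem_erase hi; rw [hT, Finset.mem_filter] at this; exact this.1
        have hi'T : i' ∈ OPT := by
          have := Finset.mem_of_mem_erase hi'; rw [hT, Finset.mem_filter] at this; exact this.1
        -- both have nonempty intersections (else they'd equal j)
        have hne1 : (S i ∩ S j).Nonempty := by
          have hij : i ≠ j := Finset.ne_of_mem_erase hi
          have hiT2 := Finset.mem_of_mem_erase hi; rw [hT, Finset.mem_filter] at hiT2
          rcases (hf i hiT2.1).2.2 with h | h
          · rw [hiT2.2] at h; exact absurd h hij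
          · rw [hiT2.2] at h; rwa [Finset.not_disjoint_iff_nonempty_inter] at h
        have hne2 : (S i' ∩ S j).Nonempty := by
          have hij : i' ≠ j := Finset.ne_of_mem_erase hi'
          have hiT2 := Finset.mem_of_mem_erase hi'; rw [hT, Finset.mem_filter] at hiT2
          rcases (hf i' hiT2.1).2.2 with h | h
          · rw [hiT2.2] at h; exact absurd h hij
          · rw [hiT2.2] at h; rwa [Finset.not_disjoint_iff_nonempty_inter] at h
        simp only [dif_pos hne1, dif_pos hne2] at heq
        have hd := hOPT hiT hi'T hne
        have h1 : hne1.choose ∈ S i := Finset.mem_of_mem_inter_left hne1.choose_spec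
        have h2 : hne2.choose ∈ S i' := Finset.mem_of_mem_inter_left hne2.choose_spec
        rw [heq] at h1
        exact (Finset.disjoint_left.mp hd h1) h2
    calc T.card ≤ (T.erase j).card + 1 := by
            have hsub : T ⊆ insert j (T.erase j) := by
              intro x hx; by_cases h : x = j
              · simp [h]
              · exact Finset.mem_insert_of_mem (Finset.mem_erase.mpr ⟨h, hx⟩)
            exact (Finset.card_le_card hsub).trans (Finset.card_insert_le _ _)
      _ ≤ (S j).card + 1 := by omega
      _ ≤ k + 1 := by have := hk j; omega
  calc ∑ i ∈ OPT.filter (fun i => f i = j), v i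
      ≤ ∑ i ∈ OPT.filter (fun i => f i = j), v j := by
        apply Finset.sum_le_sum
        intro i hi
        rw [Finset.mem_filter] at hi
        have := (hf i hi.1).2.1
        rwa [hi.2] at this
    _ = (OPT.filter (fun i => f i = j)).card * v j := by rw [Finset.sum_const, nsmul_eq_mul]
    _ ≤ ((k : ℝ) + 1) * v j := by
        apply mul_le_mul_of_nonneg_right _ (hv j)
        exact_mod_cast hcard
end

section
/- In the 3-object, 3-bidder instance with values t₁({a,b}) = 1+3ε, t₁({c}) = 1, t₂({a}) = 1, t₂({b,c}) = 1+ε, t₃({b}) = 1 (each bidder allocatable at most 2 objects, allocated sets disjoint, standard greedy by declared value with ties favoring lower-indexed bids), the declaration profile where all bid truthfully except bidder 1 who bids 1+ε+δ (just enough to win) on {a,b} is a pure Nash equilibrium of the first-price mechanism achieving welfare 1+3ε, while the optimal welfare is 3; hence the pure price of anarchy is at least 3/(1+3ε). -/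
open scoped Classical

/-- True valuations in the tightness example (objects `a = 0`, `b = 1`, `c = 2`):
`t₁({a,b}) = 1+3ε`, `t₁({c}) = 1`, `t₂({a}) = 1`, `t₂({b,c}) = 1+ε`, `t₃({b}) = 1`,
extended monotonically. -/
noncomputable def tval16 (ε : ℝ) : Fin 3 → Finset (Fin 3) → ℝ := fun i S =>
  if i = 0 then (if {0, 1} ⊆ S then 1 + 3 * ε else if (2 : Fin 3) ∈ S then 1 else 0)
  else if i = 1 then (if {1, 2} ⊆ S then 1 + ε else if (0 : Fin 3) ∈ S then 1 else 0)
  else (if (1 : Fin 3) ∈ S then 1 else 0)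

/-- The equilibrium declarations: all truthful except bidder 1, who bids `1+ε`
(just enough to win, ties favouring lower-indexed bids) on `{a,b}`. -/
noncomputable def decl16 (ε : ℝ) : Fin 3 → Finset (Fin 3) → ℝ := fun i S =>
  if i = 0 then (if {0, 1} ⊆ S then 1 + ε else if (2 : Fin 3) ∈ S then 1 else 0)
  else tval16 ε i S

/-- All (agent, set) pairs, ordered by agent index (tie-break favours lower index). -/
noncomputable def pairs16 : List (Fin 3 × Finset (Fin 3)) :=
  (List.finRange 3).flatMap fun i =>
    ((Finset.univ : Finset (Finset (Fin 3))).toList.map fun S => (i, S))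

/-- Pick the feasible (agent, set) pair of highest declared value (sets of size at most 2,
disjoint from already-used objects, agent not yet served); ties favour earlier pairs. -/
noncomputable def pick16 (d : Fin 3 → Finset (Fin 3) → ℝ)
    (used : Finset (Fin 3)) (done : List (Fin 3)) : Option (Fin 3 × Finset (Fin 3)) :=
  (pairs16.filter fun p =>
      !done.contains p.1 && decide (Disjoint p.2 used) && decide (p.2.card ≤ 2)).foldl
    (fun best p =>
      match best with
      | none => some p
      | some q => if d q.1 q.2 < d p.1 p.2 then some p else some q) none

/-- The standard greedy allocation by declared value. -/
noncomputable def greedy16 (d : Fin 3 → Finset (Fin 3) → ℝ) :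
    ℕ → Finset (Fin 3) → List (Fin 3) → List (Fin 3 × Finset (Fin 3))
  | 0, _, _ => []
  | fuel + 1, used, done =>
    match pick16 d used done with
    | none => []
    | some p => p :: greedy16 d fuel (used ∪ p.2) (p.1 :: done)

/-- Set allocated to agent `i` by the greedy rule on declarations `d`. -/
noncomputable def alloc16 (d : Fin 3 → Finset (Fin 3) → ℝ) (i : Fin 3) : Finset (Fin 3) :=
  (((greedy16 d 3 ∅ []).find? fun p => p.1 == i).map Prod.snd).getD ∅

/-- First-price utility of agent `i`. -/
noncomputable def util16 (ε : ℝ) (d : Fin 3 → Finset (Fin 3) → ℝ) (i : Fin 3) : ℝ :=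
  tval16 ε i (alloc16 d i) - d i (alloc16 d i)

/-! ### Auxiliary lemmas -/

section Aux

/-- The one-step "keep the strictly better pair" function used by `pick16`. -/
noncomputable def step16 (d : Fin 3 → Finset (Fin 3) → ℝ) :
    Option (Fin 3 × Finset (Fin 3)) → Fin 3 × Finset (Fin 3) → Option (Fin 3 × Finset (Fin 3)) :=
  fun best p =>
    match best with
    | none => some p
    | some q => if d q.1 q.2 < d p.1 p.2 then some p else some q

lemma pick16_eq (d used done) : pick16 d used done =
    (pairs16.filter fun p =>
      !done.contains p.1 && decide (Disjoint p.2 used) && decide (p.2.card ≤ 2)).foldl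
      (step16 d) none := rfl

lemma fold_ne_none (d) : ∀ (l : List (Fin 3 × Finset (Fin 3))) (b),
    ∃ p, l.foldl (step16 d) (some b) = some p := by
  intro l
  induction l with
  | nil => exact fun b => ⟨b, rfl⟩
  | cons a l ih =>
    intro b
    rw [List.foldl_cons]
    show ∃ p, (l.foldl (step16 d) (if d b.1 b.2 < d a.1 a.2 then some a else some b)) = some p
    split_ifs
    · exact ih a
    · exact ih b

lemma fold_spec (d) : ∀ (l : List (Fin 3 × Finset (Fin 3))) (b p),
    l.foldl (step16 d) (some b) = some p →
    d b.1 b.2 ≤ d p.1 p.2 ∧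
      ((p = b ∧ ∀ q ∈ l, d q.1 q.2 ≤ d b.1 b.2) ∨
        ∃ l₁ l₂, l = l₁ ++ p :: l₂ ∧ d b.1 b.2 < d p.1 p.2 ∧
          (∀ q ∈ l₁, d q.1 q.2 < d p.1 p.2) ∧ (∀ q ∈ l₂, d q.1 q.2 ≤ d p.1 p.2)) := by
  intro l
  induction l with
  | nil =>
    intro b p h
    simp only [List.foldl_nil, Option.some.injEq] at h
    subst h
    exact ⟨le_refl _, Or.inl ⟨rfl, by simp⟩⟩
  | cons a l ih =>
    intro b p h
    rw [List.foldl_cons] at h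
    replace h : (l.foldl (step16 d) (if d b.1 b.2 < d a.1 a.2 then some a else some b)) = some p := h
    by_cases hba : d b.1 b.2 < d a.1 a.2
    · rw [if_pos hba] at h
      obtain ⟨hap, hc⟩ := ih a p h
      refine ⟨le_of_lt (lt_of_lt_of_le hba hap), Or.inr ?_⟩
      rcases hc with ⟨rfl, hall⟩ | ⟨l₁, l₂, rfl, hap', hpre, hsuf⟩
      · exact ⟨[], l, rfl, hba, by simp, hall⟩
      · refine ⟨a :: l₁, l₂, rfl, lt_trans hba hap', ?_, hsuf⟩
        intro q hq
        rcases List.mem_cons.1 hq with rfl | hq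
        · exact hap'
        · exact hpre q hq
    · rw [if_neg hba] at h
      obtain ⟨hbp, hc⟩ := ih b p h
      refine ⟨hbp, ?_⟩
      rcases hc with ⟨rfl, hall⟩ | ⟨l₁, l₂, rfl, hbp', hpre, hsuf⟩
      · refine Or.inl ⟨rfl, ?_⟩
        intro q hq
        rcases List.mem_cons.1 hq with rfl | hq
        · exact not_lt.1 hba
        · exact hall q hq
      · refine Or.inr ⟨a :: l₁, l₂, rfl, hbp', ?_, hsuf⟩
        intro q hq
        rcases List.mem_cons.1 hq with rfl | hq
        · exact lt_of_le_of_lt (not_lt.1 hba) hbp'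
        · exact hpre q hq

lemma mem_pairs16 (q : Fin 3 × Finset (Fin 3)) : q ∈ pairs16 := by
  rcases q with ⟨i, S⟩
  simp [pairs16, List.mem_flatMap]

lemma mem_filter16 (used : Finset (Fin 3)) (done : List (Fin 3))
    (q : Fin 3 × Finset (Fin 3)) :
    q ∈ (pairs16.filter fun p =>
      !done.contains p.1 && decide (Disjoint p.2 used) && decide (p.2.card ≤ 2)) ↔
    (q.1 ∉ done ∧ Disjoint q.2 used ∧ q.2.card ≤ 2) := by
  rw [List.mem_filter]
  simp [mem_pairs16, and_assoc]

lemma pairwise_of_all16 {α} {R : α → α → Prop} (h : ∀ a b, R a b) (l : List α) :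
    l.Pairwise R := by
  induction l <;> simp_all

lemma pairs16_pairwise : pairs16.Pairwise (fun a b => a.1 ≤ b.1) := by
  unfold pairs16
  rw [show List.finRange 3 = [0, 1, 2] from rfl]
  simp only [List.flatMap_cons, List.flatMap_nil, List.append_nil]
  rw [List.pairwise_append]
  refine ⟨?_, ?_, ?_⟩
  · exact List.pairwise_map.2 (pairwise_of_all16 (fun a b => le_refl _) _)
  · rw [List.pairwise_append]
    refine ⟨List.pairwise_map.2 (pairwise_of_all16 (fun a b => le_refl _) _),
      List.pairwise_map.2 (pairwise_of_all16 (fun a b => le_refl _) _), ?_⟩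
    intro a ha b hb
    simp only [List.mem_map] at ha hb
    obtain ⟨_, _, rfl⟩ := ha; obtain ⟨_, _, rfl⟩ := hb
    exact (by decide : (1 : Fin 3) ≤ 2)
  · intro a ha b hb
    simp only [List.mem_map, List.mem_append] at ha hb
    obtain ⟨_, _, rfl⟩ := ha
    rcases hb with ⟨_, _, rfl⟩ | ⟨_, _, rfl⟩
    · exact (by decide : (0 : Fin 3) ≤ 1)
    · exact (by decide : (0 : Fin 3) ≤ 2)

lemma pick16_spec (d used done p) (h : pick16 d used done = some p) :
    (p.1 ∉ done ∧ Disjoint p.2 used ∧ p.2.card ≤ 2) ∧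
    (∀ q : Fin 3 × Finset (Fin 3), q.1 ∉ done → Disjoint q.2 used → q.2.card ≤ 2 →
        d q.1 q.2 ≤ d p.1 p.2) ∧
    (∀ q : Fin 3 × Finset (Fin 3), q.1 ∉ done → Disjoint q.2 used → q.2.card ≤ 2 →
        q.1 < p.1 → d q.1 q.2 < d p.1 p.2) := by
  rw [pick16_eq] at h
  set L := (pairs16.filter fun p =>
      !done.contains p.1 && decide (Disjoint p.2 used) && decide (p.2.card ≤ 2)) with hLdef
  have hpairw : L.Pairwise (fun a b => a.1 ≤ b.1) :=
    pairs16_pairwise.sublist List.filter_sublist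
  rcases hLs : L with _ | ⟨a, t⟩
  · rw [hLs] at h; simp at h
  · rw [hLs] at h
    rw [List.foldl_cons] at h
    replace h : (t.foldl (step16 d) (some a)) = some p := h
    obtain ⟨hale, hc⟩ := fold_spec d t a p h
    obtain ⟨l₁, l₂, hsplit, hpre, hsuf⟩ :
        ∃ l₁ l₂, (a :: t : List _) = l₁ ++ p :: l₂ ∧
          (∀ q ∈ l₁, d q.1 q.2 < d p.1 p.2) ∧ (∀ q ∈ l₂, d q.1 q.2 ≤ d p.1 p.2) := by
      rcases hc with ⟨rfl, hall⟩ | ⟨l₁, l₂, rfl, hlt, hpre, hsuf⟩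
      · exact ⟨[], t, rfl, by simp, hall⟩
      · refine ⟨a :: l₁, l₂, rfl, ?_, hsuf⟩
        intro q hq
        rcases List.mem_cons.1 hq with rfl | hq
        · exact hlt
        · exact hpre q hq
    have hLsplit : L = l₁ ++ p :: l₂ := by rw [hLs, hsplit]
    have hpmem : p ∈ L := by rw [hLsplit]; simp
    have hfeas := (mem_filter16 used done p).1 hpmem
    refine ⟨hfeas, ?_, ?_⟩
    · intro q h1 h2 h3
      have hqL : q ∈ L := (mem_filter16 used done q).2 ⟨h1, h2, h3⟩
      rw [hLsplit, List.mem_append, List.mem_cons] at hqL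
      rcases hqL with hq | hq | hq
      · exact le_of_lt (hpre q hq)
      · subst hq; exact le_refl _
      · exact hsuf q hq
    · intro q h1 h2 h3 hlt
      have hqL : q ∈ L := (mem_filter16 used done q).2 ⟨h1, h2, h3⟩
      rw [hLsplit, List.mem_append, List.mem_cons] at hqL
      rcases hqL with hq | hq | hq
      · exact hpre q hq
      · subst hq; exact absurd hlt (lt_irrefl _)
      · exfalso
        rw [hLsplit] at hpairw
        have hple := (List.pairwise_cons.1 ((List.pairwise_append.1 hpairw).2.1)).1 q hq
        exact absurd (lt_of_lt_of_le hlt hple) (lt_irrefl _)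

lemma pick16_isSome (d used done) (q : Fin 3 × Finset (Fin 3))
    (h1 : q.1 ∉ done) (h2 : Disjoint q.2 used) (h3 : q.2.card ≤ 2) :
    ∃ p, pick16 d used done = some p := by
  rw [pick16_eq]
  have hqL := (mem_filter16 used done q).2 ⟨h1, h2, h3⟩
  rcases hLs : (pairs16.filter fun p =>
      !done.contains p.1 && decide (Disjoint p.2 used) && decide (p.2.card ≤ 2)) with _ | ⟨a, t⟩
  · rw [hLs] at hqL; simp at hqL
  · rw [hLs, List.foldl_cons]
    exact fold_ne_none d t a

lemma greedy16_succ (d fuel used done) : greedy16 d (fuel + 1) used done =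
    match pick16 d used done with
    | none => []
    | some p => p :: greedy16 d fuel (used ∪ p.2) (p.1 :: done) := rfl

lemma greedy16_disjoint (d) : ∀ (fuel) (used : Finset (Fin 3)) (done)
    (p : Fin 3 × Finset (Fin 3)), p ∈ greedy16 d fuel used done → Disjoint p.2 used := by
  intro fuel
  induction fuel with
  | zero => intro used done p hp; simp [greedy16] at hp
  | succ n ih =>
    intro used done p hp
    rw [greedy16_succ] at hp
    rcases hq : pick16 d used done with _ | q
    · rw [hq] at hp; simp at hp
    · rw [hq] at hp
      rcases List.mem_cons.1 hp with rfl | hp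
      · exact (pick16_spec d used done p hq).1.2.1
      · exact (Finset.disjoint_union_right.1 (ih (used ∪ q.2) (q.1 :: done) p hp)).1

lemma greedy16_three (d p) (h : pick16 d ∅ [] = some p) :
    greedy16 d 3 ∅ [] = p :: greedy16 d 2 (∅ ∪ p.2) [p.1] := by
  have heq : greedy16 d 3 ∅ [] =
      match pick16 d ∅ [] with
      | none => []
      | some p => p :: greedy16 d 2 (∅ ∪ p.2) [p.1] := rfl
  rw [heq, h]

lemma alloc16_none (d) (h : pick16 d ∅ [] = none) (i) : alloc16 d i = ∅ := by
  unfold alloc16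
  have heq : greedy16 d 3 ∅ [] =
      match pick16 d ∅ [] with
      | none => []
      | some p => p :: greedy16 d 2 (∅ ∪ p.2) [p.1] := rfl
  rw [heq, h]
  rfl

lemma alloc16_head (d p) (h : pick16 d ∅ [] = some p) : alloc16 d p.1 = p.2 := by
  unfold alloc16
  rw [greedy16_three d p h, List.find?_cons_of_pos (p := fun q => q.1 == p.1) (a := p) (by simp)]
  rfl

lemma alloc16_other (d p) (h : pick16 d ∅ [] = some p) (i) (hi : p.1 ≠ i) :
    ∀ x, x ∈ p.2 → x ∉ alloc16 d i := by
  intro x hx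
  unfold alloc16
  rw [greedy16_three d p h, List.find?_cons_of_neg (p := fun q => q.1 == i) (a := p) (by simp [hi])]
  rcases hf : (greedy16 d 2 (∅ ∪ p.2) [p.1]).find? (fun q => q.1 == i) with _ | q
  · rw [hf]; exact Finset.notMem_empty x
  · rw [hf]
    have hq := List.mem_of_find?_eq_some hf
    have hd := greedy16_disjoint d 2 (∅ ∪ p.2) [p.1] q hq
    simp only [Option.map_some, Option.getD_some]
    have hd2 : Disjoint q.2 p.2 := (Finset.disjoint_union_right.1 hd).2
    exact Finset.disjoint_right.1 hd2 hx

/-! value lemmas -/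

lemma tval16_0 (ε S) : tval16 ε 0 S =
    (if {0, 1} ⊆ S then 1 + 3 * ε else if (2 : Fin 3) ∈ S then 1 else 0) := rfl
lemma tval16_1 (ε S) : tval16 ε 1 S =
    (if {1, 2} ⊆ S then 1 + ε else if (0 : Fin 3) ∈ S then 1 else 0) := rfl
lemma tval16_2 (ε S) : tval16 ε 2 S = (if (1 : Fin 3) ∈ S then 1 else 0) := rfl
lemma decl16_0 (ε S) : decl16 ε 0 S =
    (if {0, 1} ⊆ S then 1 + ε else if (2 : Fin 3) ∈ S then 1 else 0) := rfl
lemma decl16_1 (ε S) : decl16 ε 1 S = tval16 ε 1 S := rfl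
lemma decl16_2 (ε S) : decl16 ε 2 S = tval16 ε 2 S := rfl

lemma tval16_0_le {ε : ℝ} (hε : 0 < ε) (S) : tval16 ε 0 S ≤ 1 + 3 * ε := by
  rw [tval16_0]; split_ifs <;> linarith
lemma tval16_1_le {ε : ℝ} (hε : 0 < ε) (S) : tval16 ε 1 S ≤ 1 + ε := by
  rw [tval16_1]; split_ifs <;> linarith
lemma tval16_2_le {ε : ℝ} (S) : tval16 ε 2 S ≤ 1 := by
  rw [tval16_2]; split_ifs <;> linarith
lemma decl16_0_le {ε : ℝ} (hε : 0 < ε) (S) : decl16 ε 0 S ≤ 1 + ε := by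
  rw [decl16_0]; split_ifs <;> linarith

lemma tval16_0_le_one {ε : ℝ} (hε : 0 < ε) {S} (h : ¬ {0, 1} ⊆ S) : tval16 ε 0 S ≤ 1 := by
  rw [tval16_0, if_neg h]; split_ifs <;> linarith
lemma tval16_1_le_one {ε : ℝ} (hε : 0 < ε) {S} (h : ¬ {1, 2} ⊆ S) : tval16 ε 1 S ≤ 1 := by
  rw [tval16_1, if_neg h]; split_ifs <;> linarith

lemma decl16_0_ge {ε : ℝ} (hε : 0 < ε) {S} (h : 1 + ε ≤ decl16 ε 0 S) : {0, 1} ⊆ S := by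
  rw [decl16_0] at h
  by_contra hc
  rw [if_neg hc] at h
  split_ifs at h <;> linarith
lemma decl16_1_ge {ε : ℝ} (hε : 0 < ε) {S} (h : 1 + ε ≤ decl16 ε 1 S) : {1, 2} ⊆ S := by
  rw [decl16_1, tval16_1] at h
  by_contra hc
  rw [if_neg hc] at h
  split_ifs at h <;> linarith

lemma tval16_0_zero {ε : ℝ} {S} (h1 : (1 : Fin 3) ∉ S) (h2 : (2 : Fin 3) ∉ S) :
    tval16 ε 0 S = 0 := by
  rw [tval16_0, if_neg, if_neg h2]
  intro hc; exact h1 (hc (by decide))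
lemma tval16_1_zero {ε : ℝ} {S} (h0 : (0 : Fin 3) ∉ S) (h1 : (1 : Fin 3) ∉ S) :
    tval16 ε 1 S = 0 := by
  rw [tval16_1, if_neg, if_neg h0]
  intro hc; exact h1 (hc (by decide))
lemma tval16_2_zero {ε : ℝ} {S} (h1 : (1 : Fin 3) ∉ S) : tval16 ε 2 S = 0 := by
  rw [tval16_2, if_neg h1]

end Aux

lemma fin3_cases (j : Fin 3) : j = 0 ∨ j = 1 ∨ j = 2 := by fin_cases j <;> simp

/-- The declaration profile `decl16 ε` is a pure Nash equilibrium of the first-price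
greedy mechanism achieving welfare `1 + 3ε`, while the optimal welfare is `3`
(achieved by giving `{c}` to bidder 1, `{a}` to bidder 2, `{b}` to bidder 3);
hence the pure price of anarchy is at least `3/(1+3ε)`. -/
theorem tight_poa_example (ε : ℝ) (hε : 0 < ε) (hε' : ε < 1 / 2) :
    (∀ (i : Fin 3) (d' : Finset (Fin 3) → ℝ), (∀ S, 0 ≤ d' S) →
        (∀ S T, S ⊆ T → d' S ≤ d' T) →
        util16 ε (Function.update (decl16 ε) i d') i ≤ util16 ε (decl16 ε) i) ∧
      (∑ i : Fin 3, tval16 ε i (alloc16 (decl16 ε) i) = 1 + 3 * ε) ∧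
      (∀ A : Fin 3 → Finset (Fin 3), (∀ i, (A i).card ≤ 2) →
        (∀ i j, i ≠ j → Disjoint (A i) (A j)) → ∑ i, tval16 ε i (A i) ≤ 3) ∧
      (tval16 ε 0 {2} + tval16 ε 1 {0} + tval16 ε 2 {1} = 3) := by
  -- the equilibrium greedy run: round 1 gives {0,1} to bidder 0
  have hpick : pick16 (decl16 ε) ∅ [] = some (0, ({0, 1} : Finset (Fin 3))) := by
    obtain ⟨p, hp⟩ := pick16_isSome (decl16 ε) ∅ [] (0, ∅) (by simp) (by simp) (by simp)
    obtain ⟨⟨_, _, hcard⟩, hmax, hstrict⟩ := pick16_spec _ _ _ _ hp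
    have hkey : (1 : ℝ) + ε ≤ decl16 ε p.1 p.2 := by
      have h := hmax (0, ({0, 1} : Finset (Fin 3))) (by simp) (by simp) (by decide)
      have he : decl16 ε (0, ({0, 1} : Finset (Fin 3))).1 (0, ({0, 1} : Finset (Fin 3))).2
          = 1 + ε := rfl
      rw [he] at h
      exact h
    obtain ⟨j, S⟩ := p
    have hkey' : (1 : ℝ) + ε ≤ decl16 ε j S := hkey
    have hcard' : S.card ≤ 2 := hcard
    rcases fin3_cases j with rfl | rfl | rfl
    · have hsub : ({0, 1} : Finset (Fin 3)) ⊆ S := decl16_0_ge hε hkey'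
      have hS : S = {0, 1} := by
        refine (Finset.eq_of_subset_of_card_le hsub ?_).symm
        rw [show ({0, 1} : Finset (Fin 3)).card = 2 from rfl]
        exact hcard'
      rw [hS] at hp
      exact hp
    · exfalso
      have hle : decl16 ε 1 S ≤ 1 + ε := by rw [decl16_1]; exact tval16_1_le hε S
      have hstr := hstrict (0, ({0, 1} : Finset (Fin 3))) (by simp) (by simp) (by decide)
        (by decide : (0 : Fin 3) < 1)
      have he : decl16 ε (0, ({0, 1} : Finset (Fin 3))).1 (0, ({0, 1} : Finset (Fin 3))).2
          = 1 + ε := rfl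
      rw [he] at hstr
      have hstr' : (1 : ℝ) + ε < decl16 ε 1 S := hstr
      linarith
    · exfalso
      have hle : decl16 ε 2 S ≤ 1 := by rw [decl16_2]; exact tval16_2_le S
      linarith
  have key1 : ∀ x, x ∈ ({0, 1} : Finset (Fin 3)) → x ∉ alloc16 (decl16 ε) 1 :=
    alloc16_other (decl16 ε) (0, {0, 1}) hpick 1 (by decide)
  have key2 : ∀ x, x ∈ ({0, 1} : Finset (Fin 3)) → x ∉ alloc16 (decl16 ε) 2 :=
    alloc16_other (decl16 ε) (0, {0, 1}) hpick 2 (by decide)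
  have ha0 : alloc16 (decl16 ε) 0 = {0, 1} := alloc16_head (decl16 ε) (0, {0, 1}) hpick
  have ht1 : tval16 ε 1 (alloc16 (decl16 ε) 1) = 0 :=
    tval16_1_zero (key1 0 (by decide)) (key1 1 (by decide))
  have ht2 : tval16 ε 2 (alloc16 (decl16 ε) 2) = 0 := tval16_2_zero (key2 1 (by decide))
  have hu0 : util16 ε (decl16 ε) 0 = (1 + 3 * ε) - (1 + ε) := by
    unfold util16
    rw [ha0]
    rw [show tval16 ε 0 ({0, 1} : Finset (Fin 3)) = 1 + 3 * ε from rfl,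
      show decl16 ε 0 ({0, 1} : Finset (Fin 3)) = 1 + ε from rfl]
  have hu1 : util16 ε (decl16 ε) 1 = 0 := by
    unfold util16
    rw [decl16_1, ht1]
    ring
  have hu2 : util16 ε (decl16 ε) 2 = 0 := by
    unfold util16
    rw [decl16_2, ht2]
    ring
  refine ⟨?_, ?_, ?_, ?_⟩
  · -- Nash equilibrium
    intro i d' hpos hmono
    rcases fin3_cases i with rfl | rfl | rfl
    · -- deviations of bidder 0
      rw [hu0]
      set d'' := Function.update (decl16 ε) 0 d' with hd''
      have hd0 : d'' 0 = d' := Function.update_self 0 d' (decl16 ε)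
      have hd1 : d'' 1 = decl16 ε 1 := Function.update_of_ne (by decide) d' (decl16 ε)
      have hd2 : d'' 2 = decl16 ε 2 := Function.update_of_ne (by decide) d' (decl16 ε)
      rcases hp : pick16 d'' ∅ [] with _ | p
      · have hA := alloc16_none d'' hp 0
        unfold util16
        rw [hA, hd0, show tval16 ε 0 (∅ : Finset (Fin 3)) = 0 from rfl]
        have := hpos ∅
        linarith
      · obtain ⟨⟨_, _, hcard⟩, hmax, hstrict⟩ := pick16_spec _ _ _ _ hp
        obtain ⟨j, S⟩ := p
        have hcomp : (1 : ℝ) + ε ≤ d'' j S := by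
          have h := hmax (1, ({1, 2} : Finset (Fin 3))) (by simp) (by simp) (by decide)
          have he : d'' (1, ({1, 2} : Finset (Fin 3))).1 (1, ({1, 2} : Finset (Fin 3))).2
              = 1 + ε := by
            show d'' 1 {1, 2} = 1 + ε
            rw [hd1]
            rfl
          rw [he] at h
          exact h
        rcases fin3_cases j with rfl | rfl | rfl
        · have hA : alloc16 d'' 0 = S := alloc16_head d'' (0, S) hp
          unfold util16
          rw [hA, hd0]
          have h1 := tval16_0_le hε S
          have h2 : (1 : ℝ) + ε ≤ d' S := by rw [← hd0]; exact hcomp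
          linarith
        · have hsub : ({1, 2} : Finset (Fin 3)) ⊆ S := by
            apply decl16_1_ge hε
            rw [← hd1]
            exact hcomp
          have hnm := alloc16_other d'' (1, S) hp 0 (by decide : (1 : Fin 3) ≠ 0)
          have h1 : (1 : Fin 3) ∉ alloc16 d'' 0 := hnm 1 (hsub (by decide))
          have h2 : (2 : Fin 3) ∉ alloc16 d'' 0 := hnm 2 (hsub (by decide))
          unfold util16
          rw [hd0, tval16_0_zero h1 h2]
          have := hpos (alloc16 d'' 0)
          linarith
        · exfalso
          have hle : decl16 ε 2 S ≤ 1 := by rw [decl16_2]; exact tval16_2_le S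
          rw [← hd2] at hle
          linarith
    · -- deviations of bidder 1
      rw [hu1]
      set d'' := Function.update (decl16 ε) 1 d' with hd''
      have hd0 : d'' 0 = decl16 ε 0 := Function.update_of_ne (by decide) d' (decl16 ε)
      have hd1 : d'' 1 = d' := Function.update_self 1 d' (decl16 ε)
      have hd2 : d'' 2 = decl16 ε 2 := Function.update_of_ne (by decide) d' (decl16 ε)
      rcases hp : pick16 d'' ∅ [] with _ | p
      · have hA := alloc16_none d'' hp 1
        unfold util16
        rw [hA, hd1, show tval16 ε 1 (∅ : Finset (Fin 3)) = 0 from rfl]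
        have := hpos ∅
        linarith
      · obtain ⟨⟨_, _, hcard⟩, hmax, hstrict⟩ := pick16_spec _ _ _ _ hp
        obtain ⟨j, S⟩ := p
        have hcomp : (1 : ℝ) + ε ≤ d'' j S := by
          have h := hmax (0, ({0, 1} : Finset (Fin 3))) (by simp) (by simp) (by decide)
          have he : d'' (0, ({0, 1} : Finset (Fin 3))).1 (0, ({0, 1} : Finset (Fin 3))).2
              = 1 + ε := by
            show d'' 0 {0, 1} = 1 + ε
            rw [hd0]
            rfl
          rw [he] at h
          exact h
        rcases fin3_cases j with rfl | rfl | rfl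
        · have hsub : ({0, 1} : Finset (Fin 3)) ⊆ S := by
            apply decl16_0_ge hε
            rw [← hd0]
            exact hcomp
          have hnm := alloc16_other d'' (0, S) hp 1 (by decide : (0 : Fin 3) ≠ 1)
          have h0 : (0 : Fin 3) ∉ alloc16 d'' 1 := hnm 0 (hsub (by decide))
          have h1 : (1 : Fin 3) ∉ alloc16 d'' 1 := hnm 1 (hsub (by decide))
          unfold util16
          rw [hd1, tval16_1_zero h0 h1]
          have := hpos (alloc16 d'' 1)
          linarith
        · have hA : alloc16 d'' 1 = S := alloc16_head d'' (1, S) hp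
          unfold util16
          rw [hA, hd1]
          have h1 := tval16_1_le hε S
          have h2 : (1 : ℝ) + ε ≤ d' S := by rw [← hd1]; exact hcomp
          linarith
        · exfalso
          have hle : decl16 ε 2 S ≤ 1 := by rw [decl16_2]; exact tval16_2_le S
          rw [← hd2] at hle
          linarith
    · -- deviations of bidder 2
      rw [hu2]
      set d'' := Function.update (decl16 ε) 2 d' with hd''
      have hd0 : d'' 0 = decl16 ε 0 := Function.update_of_ne (by decide) d' (decl16 ε)
      have hd1 : d'' 1 = decl16 ε 1 := Function.update_of_ne (by decide) d' (decl16 ε)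
      have hd2 : d'' 2 = d' := Function.update_self 2 d' (decl16 ε)
      rcases hp : pick16 d'' ∅ [] with _ | p
      · have hA := alloc16_none d'' hp 2
        unfold util16
        rw [hA, hd2, show tval16 ε 2 (∅ : Finset (Fin 3)) = 0 from rfl]
        have := hpos ∅
        linarith
      · obtain ⟨⟨_, _, hcard⟩, hmax, hstrict⟩ := pick16_spec _ _ _ _ hp
        obtain ⟨j, S⟩ := p
        have hcomp : (1 : ℝ) + ε ≤ d'' j S := by
          have h := hmax (0, ({0, 1} : Finset (Fin 3))) (by simp) (by simp) (by decide)
          have he : d'' (0, ({0, 1} : Finset (Fin 3))).1 (0, ({0, 1} : Finset (Fin 3))).2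
              = 1 + ε := by
            show d'' 0 {0, 1} = 1 + ε
            rw [hd0]
            rfl
          rw [he] at h
          exact h
        rcases fin3_cases j with rfl | rfl | rfl
        · have hsub : ({0, 1} : Finset (Fin 3)) ⊆ S := by
            apply decl16_0_ge hε
            rw [← hd0]
            exact hcomp
          have hnm := alloc16_other d'' (0, S) hp 2 (by decide : (0 : Fin 3) ≠ 2)
          have h1 : (1 : Fin 3) ∉ alloc16 d'' 2 := hnm 1 (hsub (by decide))
          unfold util16
          rw [hd2, tval16_2_zero h1]
          have := hpos (alloc16 d'' 2)
          linarith
        · have hsub : ({1, 2} : Finset (Fin 3)) ⊆ S := by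
            apply decl16_1_ge hε
            rw [← hd1]
            exact hcomp
          have hnm := alloc16_other d'' (1, S) hp 2 (by decide : (1 : Fin 3) ≠ 2)
          have h1 : (1 : Fin 3) ∉ alloc16 d'' 2 := hnm 1 (hsub (by decide))
          unfold util16
          rw [hd2, tval16_2_zero h1]
          have := hpos (alloc16 d'' 2)
          linarith
        · have hA : alloc16 d'' 2 = S := alloc16_head d'' (2, S) hp
          unfold util16
          rw [hA, hd2]
          have h1 := tval16_2_le (ε := ε) S
          have h2 : (1 : ℝ) + ε ≤ d' S := by rw [← hd2]; exact hcomp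
          linarith
  · -- equilibrium welfare
    rw [Fin.sum_univ_three, ha0, ht1, ht2,
      show tval16 ε 0 ({0, 1} : Finset (Fin 3)) = 1 + 3 * ε from rfl]
    ring
  · -- optimal welfare is at most 3
    intro A hcard hdisj
    rw [Fin.sum_univ_three]
    by_cases h0 : ({0, 1} : Finset (Fin 3)) ⊆ A 0
    · have h00 : (0 : Fin 3) ∈ A 0 := h0 (by decide)
      have h01 : (1 : Fin 3) ∈ A 0 := h0 (by decide)
      have hz1 : tval16 ε 1 (A 1) = 0 :=
        tval16_1_zero (Finset.disjoint_left.1 (hdisj 0 1 (by decide)) h00)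
          (Finset.disjoint_left.1 (hdisj 0 1 (by decide)) h01)
      have hz2 : tval16 ε 2 (A 2) = 0 :=
        tval16_2_zero (Finset.disjoint_left.1 (hdisj 0 2 (by decide)) h01)
      rw [tval16_0, if_pos h0, hz1, hz2]
      linarith
    · have hb0 := tval16_0_le_one hε h0
      by_cases h1 : ({1, 2} : Finset (Fin 3)) ⊆ A 1
      · have h11 : (1 : Fin 3) ∈ A 1 := h1 (by decide)
        have hz2 : tval16 ε 2 (A 2) = 0 :=
          tval16_2_zero (Finset.disjoint_left.1 (hdisj 1 2 (by decide)) h11)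
        have hb1 := tval16_1_le hε (A 1)
        rw [hz2]
        linarith
      · have hb1 := tval16_1_le_one hε h1
        have hb2 := tval16_2_le (ε := ε) (A 2)
        linarith
  · -- the optimal allocation has welfare 3
    rw [show tval16 ε 0 ({2} : Finset (Fin 3)) = 1 from rfl,
      show tval16 ε 1 ({0} : Finset (Fin 3)) = 1 from rfl,
      show tval16 ε 2 ({1} : Finset (Fin 3)) = 1 from rfl]
    norm_num
end
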